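/- The finite-gap translation and KdV vector fields commute: Ψ and Ξ are smooth on ℝ^N, and for all i, j ∈ {1, …, N} and all φ ∈ ℝ^N, Ψ_j(φ) · ∂Ξ_i/∂φ_j(φ) − Ξ_j(φ) · ∂Ψ_i/∂φ_j(φ) = 0. -/

import Mathlib

open scoped Real BigOperators
open Real

noncomputable section

/-- `μ_j(φ) = E_j^- + γ_j cos²(φ_j/2)` in the finite-gap setting. -/
def muF {N : ℕ} (Em Ep : Fin N → ℝ) (φ : Fin N → ℝ) (j : Fin N) : ℝ :=
  Em j + (Ep j - Em j) * Real.cos (φ j / 2) ^ 2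

/-- `Q_1(φ) = E̲ + ∑_{j=1}^N (E_j^- + E_j^+ - 2 μ_j(φ))`. -/
def Q1F {N : ℕ} (Em Ep : Fin N → ℝ) (E0 : ℝ) (φ : Fin N → ℝ) : ℝ :=
  E0 + ∑ j, (Em j + Ep j - 2 * muF Em Ep φ j)

/-- `Ψ_j(φ) = 2 ((μ_j - E̲) ∏_{l≠j} (E_l^- - μ_j)(E_l^+ - μ_j)/(μ_l - μ_j)²)^{1/2}`. -/
def PsiF {N : ℕ} (Em Ep : Fin N → ℝ) (E0 : ℝ) (j : Fin N) (φ : Fin N → ℝ) : ℝ :=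
  2 * Real.sqrt ((muF Em Ep φ j - E0) *
    ∏ l ∈ Finset.univ.erase j,
      ((Em l - muF Em Ep φ j) * (Ep l - muF Em Ep φ j) /
        (muF Em Ep φ l - muF Em Ep φ j) ^ 2))

/-- `Ξ_j(φ) = -2 (Q_1(φ) + 2 μ_j(φ)) Ψ_j(φ)`. -/
def XiF {N : ℕ} (Em Ep : Fin N → ℝ) (E0 : ℝ) (j : Fin N) (φ : Fin N → ℝ) : ℝ :=
  -2 * (Q1F Em Ep E0 φ + 2 * muF Em Ep φ j) * PsiF Em Ep E0 j φ

namespace FGaux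

/-- The argument of the square root in `PsiF`. -/
def argF {N : ℕ} (Em Ep : Fin N → ℝ) (E0 : ℝ) (j : Fin N) (φ : Fin N → ℝ) : ℝ :=
  (muF Em Ep φ j - E0) *
    ∏ l ∈ Finset.univ.erase j,
      ((Em l - muF Em Ep φ j) * (Ep l - muF Em Ep φ j) /
        (muF Em Ep φ l - muF Em Ep φ j) ^ 2)

lemma psiF_eq {N : ℕ} (Em Ep : Fin N → ℝ) (E0 : ℝ) (j : Fin N) (φ : Fin N → ℝ) :
    PsiF Em Ep E0 j φ = 2 * Real.sqrt (argF Em Ep E0 j φ) := rfl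

variable {N : ℕ} {Em Ep : Fin N → ℝ} {E0 : ℝ}

lemma mu_mem (hlt : ∀ j, Em j < Ep j) (φ : Fin N → ℝ) (l : Fin N) :
    Em l ≤ muF Em Ep φ l ∧ muF Em Ep φ l ≤ Ep l := by
  have h1 : Real.cos (φ l / 2) ^ 2 ≤ 1 := Real.cos_sq_le_one _
  have h2 : (0:ℝ) ≤ Real.cos (φ l / 2) ^ 2 := sq_nonneg _
  have h3 := hlt l
  simp only [muF]
  constructor <;> nlinarith

lemma mu_ne (hlt : ∀ j, Em j < Ep j)
    (hdisj : ∀ j l : Fin N, j ≠ l → Ep j < Em l ∨ Ep l < Em j)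
    (φ : Fin N → ℝ) {i l : Fin N} (h : l ≠ i) :
    muF Em Ep φ l ≠ muF Em Ep φ i := by
  have h1 := mu_mem hlt φ l
  have h2 := mu_mem hlt φ i
  rcases hdisj l i h with hc | hc
  · exact ne_of_lt (by linarith)
  · exact ne_of_gt (by linarith)

lemma num_pos (hlt : ∀ j, Em j < Ep j)
    (hdisj : ∀ j l : Fin N, j ≠ l → Ep j < Em l ∨ Ep l < Em j)
    (φ : Fin N → ℝ) {i l : Fin N} (h : l ≠ i) :
    0 < (Em l - muF Em Ep φ i) * (Ep l - muF Em Ep φ i) := by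
  have h1 := mu_mem hlt φ i
  have h2 := hlt l
  rcases hdisj l i h with hc | hc
  · exact mul_pos_of_neg_of_neg (by linarith) (by linarith)
  · exact mul_pos (by linarith) (by linarith)

lemma argF_pos (hlt : ∀ j, Em j < Ep j) (hE0 : ∀ j, E0 < Em j)
    (hdisj : ∀ j l : Fin N, j ≠ l → Ep j < Em l ∨ Ep l < Em j)
    (i : Fin N) (φ : Fin N → ℝ) : 0 < argF Em Ep E0 i φ := by
  have h1 := mu_mem hlt φ i
  refine mul_pos (by have := hE0 i; linarith) (Finset.prod_pos ?_)
  intro l hl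
  have hlne : l ≠ i := Finset.ne_of_mem_erase hl
  refine div_pos (num_pos hlt hdisj φ hlne) ?_
  have hne : muF Em Ep φ l - muF Em Ep φ i ≠ 0 :=
    sub_ne_zero.2 (mu_ne hlt hdisj φ hlne)
  exact lt_of_le_of_ne (sq_nonneg _) (Ne.symm (pow_ne_zero 2 hne))

lemma mu_contDiff (l : Fin N) : ContDiff ℝ (⊤ : ℕ∞) fun φ : Fin N → ℝ => muF Em Ep φ l := by
  have hproj : ContDiff ℝ (⊤ : ℕ∞) fun φ : Fin N → ℝ => φ l :=
    (ContinuousLinearMap.proj (R := ℝ) (φ := fun _ : Fin N => ℝ) l).contDiff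
  exact contDiff_const.add (contDiff_const.mul (((hproj.div_const 2).cos).pow 2))

lemma argF_contDiff (hlt : ∀ j, Em j < Ep j)
    (hdisj : ∀ j l : Fin N, j ≠ l → Ep j < Em l ∨ Ep l < Em j)
    (i : Fin N) : ContDiff ℝ (⊤ : ℕ∞) (argF Em Ep E0 i) := by
  refine ((mu_contDiff i).sub contDiff_const).mul (contDiff_prod ?_)
  intro l hl
  have hlne : l ≠ i := Finset.ne_of_mem_erase hl
  refine ContDiff.div ((contDiff_const.sub (mu_contDiff i)).mul
    (contDiff_const.sub (mu_contDiff i))) (((mu_contDiff l).sub (mu_contDiff i)).pow 2) ?_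
  intro φ
  exact pow_ne_zero 2 (sub_ne_zero.2 (mu_ne hlt hdisj φ hlne))

lemma psiF_contDiff (hlt : ∀ j, Em j < Ep j) (hE0 : ∀ j, E0 < Em j)
    (hdisj : ∀ j l : Fin N, j ≠ l → Ep j < Em l ∨ Ep l < Em j)
    (i : Fin N) : ContDiff ℝ (⊤ : ℕ∞) (PsiF Em Ep E0 i) := by
  have h : ContDiff ℝ (⊤ : ℕ∞) fun φ => 2 * Real.sqrt (argF Em Ep E0 i φ) := by
    rw [contDiff_iff_contDiffAt]
    intro φ
    exact contDiffAt_const.mul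
      ((Real.contDiffAt_sqrt (argF_pos hlt hE0 hdisj i φ).ne').comp φ
        (argF_contDiff hlt hdisj i).contDiffAt)
  exact h

lemma q1F_contDiff : ContDiff ℝ (⊤ : ℕ∞) (Q1F Em Ep E0) := by
  have h : ContDiff ℝ (⊤ : ℕ∞) fun φ : Fin N → ℝ =>
      E0 + ∑ l, (Em l + Ep l - 2 * muF Em Ep φ l) := by
    refine contDiff_const.add (ContDiff.sum ?_)
    intro l _
    exact contDiff_const.sub (contDiff_const.mul (mu_contDiff l))
  exact h

lemma xiF_contDiff (hlt : ∀ j, Em j < Ep j) (hE0 : ∀ j, E0 < Em j)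
    (hdisj : ∀ j l : Fin N, j ≠ l → Ep j < Em l ∨ Ep l < Em j)
    (i : Fin N) : ContDiff ℝ (⊤ : ℕ∞) (XiF Em Ep E0 i) := by
  have h : ContDiff ℝ (⊤ : ℕ∞) fun φ =>
      -2 * (Q1F Em Ep E0 φ + 2 * muF Em Ep φ i) * PsiF Em Ep E0 i φ :=
    (contDiff_const.mul (q1F_contDiff.add (contDiff_const.mul (mu_contDiff i)))).mul
      (psiF_contDiff hlt hE0 hdisj i)
  exact h

lemma star_calc (s C1 B D ba : ℝ) (hs : s ≠ 0) (hba : ba ≠ 0)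
    (h : s ^ 2 = C1 * (B / ba ^ 2)) :
    ba * (2 * (C1 * (-(B * (((2:ℕ):ℝ) * ba ^ (2-1) * D)) / (ba ^ 2) ^ 2) / (2 * s))) +
      D * (2 * s) = 0 := by
  have h2 : C1 * B = s ^ 2 * ba ^ 2 := by
    field_simp at h; linarith
  norm_num
  field_simp
  linear_combination (-(2 * D)) * h2

end FGaux

open FGaux

/-- The finite-gap translation and KdV vector fields are smooth on `ℝ^N` and commute:
`Ψ_j ∂Ξ_i/∂φ_j - Ξ_j ∂Ψ_i/∂φ_j = 0` for all `i, j` and all `φ ∈ ℝ^N`. -/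
theorem psiF_xiF_commute {N : ℕ} (hN : 1 ≤ N)
    (Em Ep : Fin N → ℝ) (E0 : ℝ)
    (hlt : ∀ j, Em j < Ep j) (hE0 : ∀ j, E0 < Em j)
    (hdisj : ∀ j l : Fin N, j ≠ l → Ep j < Em l ∨ Ep l < Em j) :
    (∀ j, ContDiff ℝ (⊤ : ℕ∞) (PsiF Em Ep E0 j)) ∧
    (∀ j, ContDiff ℝ (⊤ : ℕ∞) (XiF Em Ep E0 j)) ∧
    (∀ (i j : Fin N) (φ : Fin N → ℝ),
      PsiF Em Ep E0 j φ * fderiv ℝ (XiF Em Ep E0 i) φ (Pi.single j 1) -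
        XiF Em Ep E0 j φ * fderiv ℝ (PsiF Em Ep E0 i) φ (Pi.single j 1) = 0) := by
  refine ⟨fun j => psiF_contDiff hlt hE0 hdisj j, fun j => xiF_contDiff hlt hE0 hdisj j, ?_⟩
  intro i j φ
  -- derivatives of the μ's
  have hdex : ∀ l : Fin N, ∃ c : ℝ, HasFDerivAt (fun ψ : Fin N → ℝ => muF Em Ep ψ l)
      (c • (ContinuousLinearMap.proj (R := ℝ) (φ := fun _ : Fin N => ℝ) l)) φ := by
    intro l
    have h0 : HasDerivAt (fun u : ℝ => u / 2) ((1:ℝ)/2) (φ l) := by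
      simpa using (hasDerivAt_id (φ l)).div_const 2
    have h1 := ((h0.cos.pow 2).const_mul (Ep l - Em l)).const_add (Em l)
    exact ⟨_, by
      have h2 := h1.comp_hasFDerivAt φ
        (ContinuousLinearMap.proj (R := ℝ) (φ := fun _ : Fin N => ℝ) l).hasFDerivAt
      exact h2⟩
  choose d hd using hdex
  -- derivative of Q1F
  have hQ : HasFDerivAt (Q1F Em Ep E0)
      (∑ l, -((2:ℝ) • (d l • (ContinuousLinearMap.proj (R := ℝ)
        (φ := fun _ : Fin N => ℝ) l)))) φ := by
    have h : HasFDerivAt (fun ψ : Fin N → ℝ => E0 + ∑ l, (Em l + Ep l - 2 * muF Em Ep ψ l))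
        (∑ l, -((2:ℝ) • (d l • (ContinuousLinearMap.proj (R := ℝ)
          (φ := fun _ : Fin N => ℝ) l)))) φ := by
      refine HasFDerivAt.const_add E0 ?_
      exact HasFDerivAt.fun_sum fun l _ => ((hd l).const_mul (2:ℝ)).const_sub (Em l + Ep l)
    exact h
  -- derivative of PsiF i at φ
  have hPdiff : DifferentiableAt ℝ (PsiF Em Ep E0 i) φ :=
    ((psiF_contDiff hlt hE0 hdisj i).differentiable (by simp)).differentiableAt
  have hPsid : HasFDerivAt (PsiF Em Ep E0 i) (fderiv ℝ (PsiF Em Ep E0 i) φ) φ :=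
    hPdiff.hasFDerivAt
  -- derivative of XiF i at φ via product rule
  have hXd : HasFDerivAt (XiF Em Ep E0 i) _ φ :=
    ((hQ.add ((hd i).const_mul 2)).const_mul (-2)).mul hPsid
  rw [hXd.fderiv]
  -- evaluate the Q1F-derivative at `Pi.single j 1`
  have e1 : (∑ l : Fin N, -((2:ℝ) • (d l • (ContinuousLinearMap.proj (R := ℝ)
      (φ := fun _ : Fin N => ℝ) l)))) (Pi.single j 1) = -2 * d j := by
    rw [ContinuousLinearMap.sum_apply]
    rw [Finset.sum_eq_single j (fun l _ hlj => by
      simp [Pi.single_eq_of_ne hlj]) (by simp)]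
    simp
  by_cases hij : i = j
  · subst hij
    simp only [ContinuousLinearMap.add_apply, ContinuousLinearMap.smul_apply, e1,
      ContinuousLinearMap.proj_apply, Pi.single_eq_same, smul_eq_mul, mul_one, Pi.add_apply]
    have hXiFj : XiF Em Ep E0 i φ =
        -2 * (Q1F Em Ep E0 φ + 2 * muF Em Ep φ i) * PsiF Em Ep E0 i φ := rfl
    rw [hXiFj]
    simp only [Q1F]
    ring
  · -- i ≠ j : directional derivative of PsiF i along e_j
    simp only [ContinuousLinearMap.add_apply, ContinuousLinearMap.smul_apply, e1,
      ContinuousLinearMap.proj_apply, Pi.single_eq_of_ne hij, smul_eq_mul, mul_zero, Pi.add_apply]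
    have hji : j ≠ i := fun h => hij h.symm
    have hjmem : j ∈ Finset.univ.erase i := Finset.mem_erase.2 ⟨hji, Finset.mem_univ j⟩
    set a := muF Em Ep φ i with ha
    set b := muF Em Ep φ j with hb
    have hba : b - a ≠ 0 := sub_ne_zero.2 (mu_ne hlt hdisj φ hji)
    set C1 := (a - E0) * ∏ l ∈ (Finset.univ.erase i).erase j,
      ((Em l - a) * (Ep l - a) / (muF Em Ep φ l - a) ^ 2) with hC1
    set B := (Em j - a) * (Ep j - a) with hB
    -- the curve t ↦ φ + t e_j
    have hh : HasDerivAt (fun t : ℝ => φ + t • (Pi.single j 1 : Fin N → ℝ)) ((Pi.single j 1 : Fin N → ℝ)) 0 := by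
      simpa using ((hasDerivAt_id (0:ℝ)).smul_const ((Pi.single j 1 : Fin N → ℝ))).const_add φ
    -- composed μ_j
    have hmj : HasDerivAt (fun t : ℝ => muF Em Ep (φ + t • (Pi.single j 1 : Fin N → ℝ)) j) (d j) 0 := by
      have h1 : HasFDerivAt (fun ψ : Fin N → ℝ => muF Em Ep ψ j)
          (d j • (ContinuousLinearMap.proj (R := ℝ) (φ := fun _ : Fin N => ℝ) j))
          (φ + (0:ℝ) • (Pi.single j 1 : Fin N → ℝ)) := by
        simpa using hd j
      have h2 := h1.comp_hasDerivAt (0:ℝ) hh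
      simpa [Function.comp_def] using h2
    -- splitting the product: only the j-factor depends on t
    have hmE : ∀ (t : ℝ) (l : Fin N), l ≠ j →
        muF Em Ep (φ + t • (Pi.single j 1 : Fin N → ℝ)) l = muF Em Ep φ l := by
      intro t l hl
      simp [muF, Pi.single_eq_of_ne hl]
    have hsplit : ∀ t : ℝ, argF Em Ep E0 i (φ + t • (Pi.single j 1 : Fin N → ℝ)) =
        C1 * (B / (muF Em Ep (φ + t • (Pi.single j 1 : Fin N → ℝ)) j - a) ^ 2) := by
      intro t
      simp only [argF]
      rw [hmE t i hij]
      rw [← Finset.mul_prod_erase _ _ hjmem]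
      rw [Finset.prod_congr rfl (fun l hl => by
        rw [hmE t l (Finset.ne_of_mem_erase hl)])]
      rw [hC1, hB, ha]
      ring
    -- derivative of the explicit right-hand side
    have hden := (hmj.sub_const a).pow 2
    have hdenne : (muF Em Ep (φ + (0:ℝ) • (Pi.single j 1 : Fin N → ℝ)) j - a) ^ 2 ≠ 0 := by
      simpa using pow_ne_zero 2 hba
    have hfrac := (hasDerivAt_const (0:ℝ) B).div hden hdenne
    have hC := hfrac.const_mul C1
    have hg : HasDerivAt (fun t : ℝ => argF Em Ep E0 i (φ + t • (Pi.single j 1 : Fin N → ℝ))) _ 0 :=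
      hC.congr_of_eventuallyEq (Filter.Eventually.of_forall hsplit)
    have hargne : argF Em Ep E0 i (φ + (0:ℝ) • (Pi.single j 1 : Fin N → ℝ)) ≠ 0 := by
      simpa using (argF_pos hlt hE0 hdisj i φ).ne'
    have hsq := hg.sqrt hargne
    have hp := hsq.const_mul (2:ℝ)
    -- uniqueness of the derivative
    have hP1 : HasFDerivAt (PsiF Em Ep E0 i) (fderiv ℝ (PsiF Em Ep E0 i) φ)
        (φ + (0:ℝ) • (Pi.single j 1 : Fin N → ℝ)) := by simpa using hPsid
    have hcomp : HasDerivAt (fun t : ℝ => PsiF Em Ep E0 i (φ + t • (Pi.single j 1 : Fin N → ℝ)))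
        (fderiv ℝ (PsiF Em Ep E0 i) φ (Pi.single j 1)) 0 := by
      simpa [Function.comp_def] using hP1.comp_hasDerivAt (0:ℝ) hh
    have hkey := hcomp.unique hp
    simp only [zero_smul, add_zero, pow_one, zero_mul, zero_sub, Pi.pow_apply] at hkey
    -- the key relation (★)
    have hsplit0 : argF Em Ep E0 i φ = C1 * (B / (b - a) ^ 2) := by
      have := hsplit 0
      simpa using this
    have hA0pos := argF_pos hlt hE0 hdisj (Em := Em) (Ep := Ep) (E0 := E0) i φ
    have hsne : Real.sqrt (argF Em Ep E0 i φ) ≠ 0 := (Real.sqrt_pos.2 hA0pos).ne'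
    have hsq2 : Real.sqrt (argF Em Ep E0 i φ) ^ 2 = C1 * (B / (b - a) ^ 2) := by
      rw [Real.sq_sqrt hA0pos.le]; exact hsplit0
    have hstar : (b - a) * fderiv ℝ (PsiF Em Ep E0 i) φ (Pi.single j 1)
        + d j * PsiF Em Ep E0 i φ = 0 := by
      rw [hkey, psiF_eq, ← hb]
      exact star_calc _ _ _ _ _ hsne hba hsq2
    -- final algebra
    have hXiFj : XiF Em Ep E0 j φ =
        -2 * (Q1F Em Ep E0 φ + 2 * muF Em Ep φ j) * PsiF Em Ep E0 j φ := rfl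
    rw [hXiFj]
    simp only [Q1F, ← ha, ← hb]
    linear_combination (4 * PsiF Em Ep E0 j φ) * hstar
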